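/- Fix an equity allocation σ ∈ ℝ^n with σ_i ≥ 0 for all i. Then there exists exactly one pair (a*, Y*) with a* ∈ ℝ^n, a*_i ≥ 0 for all i, and Y* ≥ 0 such that (I − P'(Y*)·β·diag(σ)·G)·a* = P'(Y*)·σ and Y* = Y(a*). Moreover, a*_i > 0 whenever σ_i > 0, and a*_i = 0 whenever σ_i = 0. -/

import Mathlib

open Matrix Filter Topology Set Function

/-!
For a frozen marginal probability `s` in place of `P'(Y)`, the first-order conditions read
`a = response s a`, where `response s a i = s σᵢ (1 + β (G a)ᵢ)` is monotone and affine in `a`.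
A max-ratio argument shows that for `s > 0` every subsolution lies below every nonnegative fixed
point, so nonnegative fixed points are unique and increase with `s`. If two equilibria have
performances `Y ≤ Y'`, then `P'(Y') ≤ P'(Y)`, so their actions satisfy `a' ≤ a`, whence `Y' ≤ Y`:
they coincide.

For existence, the set of `s > 0` admitting a nonnegative fixed point is an interval, open at its
right end (Knaster–Tarski for a slightly larger `s` with the supersolution `2a`), on which the fixed
point depends continuously on `s` (closed graph, bounded range). If the interval is bounded the
performance blows up at its end. Since concavity and `P < 1` give `P'(Y) ≤ 1 / Y`, some `s` has
`P'(Y(a(s))) < s`, while the reverse holds for small `s`; the intermediate value theorem gives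
`s = P'(Y(a(s)))`.
-/

theorem ConcaveOn.deriv_pos {S : Set ℝ} {P : ℝ → ℝ} (hconc : ConcaveOn ℝ S P)
    (hmono : StrictMonoOn P S) {x y : ℝ} (hx : x ∈ S) (hy : y ∈ S) (hxy : x < y)
    (hd : DifferentiableAt ℝ P x) : 0 < deriv P x :=
  ((slope_pos_iff hxy).2 (hmono hx hy hxy)).trans_le (hconc.slope_le_deriv hx hy hxy hd)

theorem ConcaveOn.deriv_le_inv {P : ℝ → ℝ} (hconc : ConcaveOn ℝ (Ici 0) P) {y : ℝ} (hy : 0 < y)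
    (hd : DifferentiableAt ℝ P y) (h0 : 0 ≤ P 0) (h1 : P y ≤ 1) : deriv P y ≤ y⁻¹ := by
  have := hconc.deriv_le_slope (mem_Ici.2 le_rfl) (mem_Ici.2 hy.le) hy hd
  rw [slope_def_field, sub_zero] at this
  exact this.trans (by rw [inv_eq_one_div]; gcongr; linarith)

namespace TeamEquilibrium

variable {n : ℕ} (G : Matrix (Fin n) (Fin n) ℝ) (β : ℝ) (σ : Fin n → ℝ)

/-- Agent `i`'s first-order condition `aᵢ = P'(Y) σᵢ ∂Y/∂aᵢ`, with `P'(Y)` frozen to `s`. -/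
noncomputable def response (s : ℝ) (a : Fin n → ℝ) : Fin n → ℝ :=
  fun i => s * σ i * (1 + β * ∑ j, G i j * a j)

noncomputable def teamPerformance (a : Fin n → ℝ) : ℝ :=
  ∑ i, a i + β / 2 * ∑ i, ∑ j, G i j * a i * a j

def solvable : Set ℝ :=
  {s | 0 < s ∧ ∃ a, 0 ≤ a ∧ IsFixedPt (response G β σ s) a}

open Classical in
noncomputable def fixedPoint (s : ℝ) : Fin n → ℝ :=
  if h : ∃ a, 0 ≤ a ∧ IsFixedPt (response G β σ s) a then h.choose else 0

def IsEquilibrium (D : ℝ → ℝ) (p : (Fin n → ℝ) × ℝ) : Prop :=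
  0 ≤ p.1 ∧ 0 ≤ p.2 ∧ IsFixedPt (response G β σ (D p.2)) p.1 ∧ p.2 = teamPerformance G β p.1

variable {G β σ}

theorem fixedPoint_spec {s : ℝ} (hs : s ∈ solvable G β σ) :
    0 ≤ fixedPoint G β σ s ∧ IsFixedPt (response G β σ s) (fixedPoint G β σ s) := by
  rw [fixedPoint, dif_pos hs.2]
  exact hs.2.choose_spec

theorem response_smul (s t : ℝ) (a : Fin n → ℝ) :
    response G β σ s (t • a) = t • response G β σ s a - (t - 1) • s • σ := by
  ext i
  simp only [response, Pi.smul_apply, Pi.sub_apply, smul_eq_mul, mul_left_comm _ t,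
    ← Finset.mul_sum]
  ring

theorem continuous_response :
    Continuous fun p : ℝ × (Fin n → ℝ) => response G β σ p.1 p.2 := by
  unfold response; fun_prop

theorem isFixedPt_of_tendsto {ι : Type*} {l : Filter ι} [l.NeBot] {s : ι → ℝ} {s₀ : ℝ}
    {a : ι → Fin n → ℝ} {a₀ : Fin n → ℝ} (hs : Tendsto s l (𝓝 s₀)) (ha : Tendsto a l (𝓝 a₀))
    (hfix : ∀ᶠ k in l, IsFixedPt (response G β σ (s k)) (a k)) :
    IsFixedPt (response G β σ s₀) a₀ :=
  tendsto_nhds_unique ((continuous_response.tendsto _).comp (hs.prodMk_nhds ha))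
    (ha.congr' (hfix.mono fun _ h => h.symm))

theorem mulVec_eq_smul_iff_isFixedPt (s : ℝ) (a : Fin n → ℝ) :
    (1 - (s * β) • (diagonal σ * G)) *ᵥ a = s • σ ↔ IsFixedPt (response G β σ s) a := by
  simp only [IsFixedPt, funext_iff, sub_mulVec, one_mulVec, smul_mulVec, ← mulVec_mulVec,
    Pi.sub_apply, Pi.smul_apply, smul_eq_mul, mulVec_diagonal]
  simp only [response, mulVec, dotProduct]
  refine forall_congr' fun i => ?_
  constructor <;> intro h <;> linarith

section TeamPerformance

theorem continuous_teamPerformance : Continuous (teamPerformance G β) := by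
  unfold teamPerformance; fun_prop

variable (hG : ∀ i j, 0 ≤ G i j) (hβ : 0 ≤ β)
include hG hβ

theorem le_teamPerformance {a : Fin n → ℝ} (ha : 0 ≤ a) (i : Fin n) :
    a i ≤ teamPerformance G β a := by
  have h1 : a i ≤ ∑ j, a j := Finset.single_le_sum (fun j _ => ha j) (Finset.mem_univ i)
  have h2 : 0 ≤ ∑ i, ∑ j, G i j * a i * a j :=
    Finset.sum_nonneg fun i _ => Finset.sum_nonneg fun j _ =>
      mul_nonneg (mul_nonneg (hG i j) (ha i)) (ha j)
  unfold teamPerformance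
  nlinarith

theorem teamPerformance_le_teamPerformance {a b : Fin n → ℝ} (ha : 0 ≤ a) (hab : a ≤ b) :
    teamPerformance G β a ≤ teamPerformance G β b := by
  have hb := ha.trans hab
  unfold teamPerformance
  gcongr with i _ j _
  all_goals first | exact hab _ | exact ha _ | exact hG _ _ | exact mul_nonneg (hG _ _) (hb _)

theorem teamPerformance_nonneg {a : Fin n → ℝ} (ha : 0 ≤ a) : 0 ≤ teamPerformance G β a := by
  simpa [teamPerformance] using teamPerformance_le_teamPerformance hG hβ le_rfl ha

end TeamPerformance

section FixedPoint

variable (hG : ∀ i j, 0 ≤ G i j) (hβ : 0 ≤ β) (hσ : ∀ i, 0 ≤ σ i)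
include hG hβ hσ

theorem response_mono {s : ℝ} (hs : 0 ≤ s) : Monotone (response G β σ s) := by
  intro a b hab i
  have : ∑ j, G i j * a j ≤ ∑ j, G i j * b j :=
    Finset.sum_le_sum fun j _ => mul_le_mul_of_nonneg_left (hab j) (hG i j)
  unfold response
  gcongr
  exact mul_nonneg hs (hσ i)

theorem response_nonneg {s : ℝ} (hs : 0 ≤ s) {a : Fin n → ℝ} (ha : 0 ≤ a) :
    0 ≤ response G β σ s a := fun i => by
  have : 0 ≤ ∑ j, G i j * a j := Finset.sum_nonneg fun j _ => mul_nonneg (hG i j) (ha j)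
  exact mul_nonneg (mul_nonneg hs (hσ i)) (by positivity)

theorem response_le_response {s t : ℝ} (hst : s ≤ t) {a : Fin n → ℝ} (ha : 0 ≤ a) :
    response G β σ s a ≤ response G β σ t a := fun i => by
  have : 0 ≤ ∑ j, G i j * a j := Finset.sum_nonneg fun j _ => mul_nonneg (hG i j) (ha j)
  unfold response
  have := hσ i
  gcongr

theorem smul_le_of_isFixedPt {s : ℝ} (hs : 0 ≤ s) {a : Fin n → ℝ} (ha : 0 ≤ a)
    (hfix : IsFixedPt (response G β σ s) a) : s • σ ≤ a := fun i => by
  have : 0 ≤ ∑ j, G i j * a j := Finset.sum_nonneg fun j _ => mul_nonneg (hG i j) (ha j)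
  rw [← hfix.eq]
  simp only [response, Pi.smul_apply, smul_eq_mul]
  nlinarith [mul_nonneg (mul_nonneg hs (hσ i)) (mul_nonneg hβ this)]

/-- If `θ = max bᵢ / aᵢ > 1`, then `b ≤ response (θ • a) = θ • a - (θ - 1) s σ` is strict at the
maximizing index. -/
theorem le_of_le_response {s : ℝ} (hs : 0 < s) {a b : Fin n → ℝ} (ha : 0 ≤ a)
    (hfix : IsFixedPt (response G β σ s) a) (hb : b ≤ response G β σ s b) : b ≤ a := by
  by_contra hba
  obtain ⟨i, hi⟩ : ∃ i, a i < b i := by simpa [Pi.le_def] using hba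
  have : Nonempty (Fin n) := ⟨i⟩
  obtain ⟨i₀, hmax⟩ := Finite.exists_max fun j => b j / a j
  set θ := b i₀ / a i₀
  have hsa := smul_le_of_isFixedPt hG hβ hσ hs.le ha hfix
  have hbσ : ∀ j, σ j = 0 → b j ≤ 0 := fun j hj => by simpa [response, hj] using hb j
  have hσa : ∀ j, a j = 0 → σ j = 0 := fun j hj => by
    have := hsa j
    simp only [Pi.smul_apply, smul_eq_mul, hj] at this
    exact le_antisymm (nonpos_of_mul_nonpos_right this hs) (hσ j)
  have hai : 0 < a i := (ha i).lt_of_ne' fun h => by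
    rw [Pi.zero_apply] at h
    linarith [hbσ i (hσa i h)]
  have hθ : 1 < θ := ((one_lt_div hai).2 hi).trans_le (hmax i)
  have hai₀ : 0 < a i₀ := (ha i₀).lt_of_ne fun h => by
    have : θ = 0 := by simp [θ, ← h]
    linarith
  have hσi₀ : 0 < σ i₀ := (hσ i₀).lt_of_ne fun h => by
    have : θ ≤ 0 := div_nonpos_of_nonpos_of_nonneg (hbσ i₀ h.symm) hai₀.le
    linarith
  have hbθ : b ≤ θ • a := fun j => by
    rcases (ha j).eq_or_lt with hj | hj
    · simpa [← hj] using hbσ j (hσa j hj.symm)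
    · simpa [div_le_iff₀ hj] using hmax j
  have key := (hb.trans (response_mono hG hβ hσ hs.le hbθ)) i₀
  rw [response_smul, hfix.eq] at key
  simp only [Pi.sub_apply, Pi.smul_apply, smul_eq_mul] at key
  have : b i₀ = θ * a i₀ := by simp [θ, hai₀.ne']
  nlinarith [mul_pos (mul_pos (sub_pos.2 hθ) hs) hσi₀]

theorem isFixedPt_response_le {s t : ℝ} (hs : 0 < s) (hst : s ≤ t) {a b : Fin n → ℝ}
    (ha : 0 ≤ a) (hfa : IsFixedPt (response G β σ s) a) (hb : 0 ≤ b)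
    (hfb : IsFixedPt (response G β σ t) b) : a ≤ b :=
  le_of_le_response hG hβ hσ (hs.trans_le hst) hb hfb
    (hfa.eq.symm.le.trans (response_le_response hG hβ hσ hst ha))

theorem isFixedPt_response_unique {s : ℝ} (hs : 0 < s) {a b : Fin n → ℝ}
    (ha : 0 ≤ a) (hfa : IsFixedPt (response G β σ s) a) (hb : 0 ≤ b)
    (hfb : IsFixedPt (response G β σ s) b) : a = b :=
  le_antisymm (isFixedPt_response_le hG hβ hσ hs le_rfl ha hfa hb hfb)
    (isFixedPt_response_le hG hβ hσ hs le_rfl hb hfb ha hfa)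

theorem exists_isFixedPt_of_response_le {s : ℝ} (hs : 0 ≤ s) {x : Fin n → ℝ} (hx : 0 ≤ x)
    (hKx : response G β σ s x ≤ x) : ∃ a, 0 ≤ a ∧ IsFixedPt (response G β σ s) a := by
  have : Fact (0 ≤ x) := ⟨hx⟩
  let f : Icc 0 x →o Icc 0 x :=
    { toFun := fun a => ⟨response G β σ s a, response_nonneg hG hβ hσ hs a.2.1,
        (response_mono hG hβ hσ hs a.2.2).trans hKx⟩
      monotone' := fun a b hab => response_mono hG hβ hσ hs hab }
  exact ⟨f.lfp, f.lfp.2.1, congrArg Subtype.val f.isFixedPt_lfp⟩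

theorem exists_gt_mem_solvable_of_response_lt {s : ℝ} (hs : 0 ≤ s) {x : Fin n → ℝ} (hx : 0 ≤ x)
    (hlt : ∀ i, σ i ≠ 0 → response G β σ s x i < x i) : ∃ t > s, t ∈ solvable G β σ := by
  have hcont : Continuous fun t => response G β σ t x :=
    continuous_response.comp (Continuous.prodMk_left x)
  have hev : ∀ᶠ t in 𝓝 s, response G β σ t x ≤ x := by
    refine eventually_all.2 fun i => ?_
    by_cases hσi : σ i = 0
    · exact .of_forall fun t => by simpa [response, hσi] using hx i
    · exact ((continuous_apply i).comp hcont).continuousAt.eventually_lt continuousAt_const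
        (hlt i hσi) |>.mono fun _ => le_of_lt
  obtain ⟨t, hst, ht⟩ := hev.exists_gt
  exact ⟨t, hst, hs.trans_lt hst,
    exists_isFixedPt_of_response_le hG hβ hσ (hs.trans hst.le) hx ht⟩

theorem monotoneOn_fixedPoint : MonotoneOn (fixedPoint G β σ) (solvable G β σ) :=
  fun _ hs _ ht hst => isFixedPt_response_le hG hβ hσ hs.1 hst (fixedPoint_spec hs).1
    (fixedPoint_spec hs).2 (fixedPoint_spec ht).1 (fixedPoint_spec ht).2

theorem mem_solvable_of_le {s t : ℝ} (hs : s ∈ solvable G β σ) (ht : 0 < t) (hts : t ≤ s) :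
    t ∈ solvable G β σ := by
  obtain ⟨ha, hfa⟩ := fixedPoint_spec hs
  obtain ⟨b, hb, hfb⟩ := exists_isFixedPt_of_response_le hG hβ hσ ht.le ha
    ((response_le_response hG hβ hσ hts ha).trans hfa.eq.le)
  exact ⟨ht, b, hb, hfb⟩

theorem solvable_nonempty : (solvable G β σ).Nonempty :=
  let ⟨t, _, ht⟩ := exists_gt_mem_solvable_of_response_lt hG hβ hσ le_rfl zero_le_one
    fun i _ => by simp [response]
  ⟨t, ht⟩

theorem exists_gt_mem_solvable {s : ℝ} (hs : s ∈ solvable G β σ) :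
    ∃ t > s, t ∈ solvable G β σ := by
  obtain ⟨ha, hfa⟩ := fixedPoint_spec hs
  refine exists_gt_mem_solvable_of_response_lt hG hβ hσ hs.1.le
    (x := (2 : ℝ) • fixedPoint G β σ s) (smul_nonneg zero_le_two ha) fun i hσi => ?_
  rw [response_smul, hfa.eq]
  simp only [Pi.sub_apply, Pi.smul_apply, smul_eq_mul]
  nlinarith [mul_pos hs.1 ((hσ i).lt_of_ne' hσi)]

/-- Every cluster value of `fixedPoint` at `s₀` is a nonnegative fixed point for `s₀`, hence the
unique one. -/
theorem continuousOn_fixedPoint {u v : ℝ} (hu : 0 < u) (hv : v ∈ solvable G β σ) :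
    ContinuousOn (fixedPoint G β σ) (Icc u v) := by
  have hmem : ∀ s ∈ Icc u v, s ∈ solvable G β σ := fun s hs =>
    mem_solvable_of_le hG hβ hσ hv (hu.trans_le hs.1) hs.2
  intro s₀ hs₀
  refine isCompact_Icc.tendsto_nhds_of_unique_mapClusterPt (s := Icc 0 (fixedPoint G β σ v))
    (eventually_nhdsWithin_of_forall fun s hs => ⟨(fixedPoint_spec (hmem s hs)).1,
      monotoneOn_fixedPoint hG hβ hσ (hmem s hs) hv hs.2⟩) fun ℓ hℓ hcl => ?_
  obtain ⟨ψ, hψℓ, hψ⟩ := hcl.exists_seq_tendsto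
  have hfix : IsFixedPt (response G β σ s₀) ℓ :=
    isFixedPt_of_tendsto (tendsto_nhds_of_tendsto_nhdsWithin hψ) hψℓ
      (hψ.eventually (eventually_nhdsWithin_of_forall fun s hs => (fixedPoint_spec (hmem s hs)).2))
  exact isFixedPt_response_unique hG hβ hσ (hmem s₀ hs₀).1 hℓ.1 hfix
    (fixedPoint_spec (hmem s₀ hs₀)).1 (fixedPoint_spec (hmem s₀ hs₀)).2

theorem csSup_mem_solvable (hbdd : BddAbove (solvable G β σ)) {x : Fin n → ℝ}
    (hx : ∀ s ∈ solvable G β σ, fixedPoint G β σ s ≤ x) :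
    sSup (solvable G β σ) ∈ solvable G β σ := by
  obtain ⟨w, -, hw, hwS⟩ := exists_seq_tendsto_sSup (solvable_nonempty hG hβ hσ) hbdd
  obtain ⟨ℓ, hℓ, φ, hφ, hlim⟩ :=
    isCompact_Icc.tendsto_subseq (x := fun k => fixedPoint G β σ (w k)) fun k =>
      ⟨(fixedPoint_spec (hwS k)).1, hx _ (hwS k)⟩
  exact ⟨(hwS 0).1.trans_le (le_csSup hbdd (hwS 0)), ℓ, hℓ.1,
    isFixedPt_of_tendsto (hw.comp hφ.tendsto_atTop) hlim
      (.of_forall fun k => (fixedPoint_spec (hwS (φ k))).2)⟩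

theorem exists_lt_teamPerformance_fixedPoint (hbdd : BddAbove (solvable G β σ)) (L : ℝ) :
    ∃ s ∈ solvable G β σ, L < teamPerformance G β (fixedPoint G β σ s) := by
  by_contra! hL
  have hsup := csSup_mem_solvable hG hβ hσ hbdd (x := fun _ => L) fun s hs i =>
    (le_teamPerformance hG hβ (fixedPoint_spec hs).1 i).trans (hL s hs)
  obtain ⟨t, ht, htS⟩ := exists_gt_mem_solvable hG hβ hσ hsup
  exact (le_csSup hbdd htS).not_gt ht

variable {D : ℝ → ℝ} (hD_anti : AntitoneOn D (Ici 0))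
include hD_anti

theorem exists_marginal_lt (hD_le : ∀ y, 0 < y → D y ≤ y⁻¹) :
    ∃ v ∈ solvable G β σ, D (teamPerformance G β (fixedPoint G β σ v)) < v := by
  by_cases hbdd : BddAbove (solvable G β σ)
  · obtain ⟨s, hs⟩ := solvable_nonempty hG hβ hσ
    obtain ⟨t, ht, hlt⟩ := exists_lt_teamPerformance_fixedPoint hG hβ hσ hbdd s⁻¹
    have hv : max t s ∈ solvable G β σ := max_rec' (· ∈ solvable G β σ) ht hs
    have hYt : 0 < teamPerformance G β (fixedPoint G β σ t) := (inv_pos.2 hs.1).trans hlt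
    have hYv : teamPerformance G β (fixedPoint G β σ t) ≤
        teamPerformance G β (fixedPoint G β σ (max t s)) :=
      teamPerformance_le_teamPerformance hG hβ (fixedPoint_spec ht).1
        (monotoneOn_fixedPoint hG hβ hσ ht hv (le_max_left t s))
    refine ⟨max t s, hv, ?_⟩
    calc D (teamPerformance G β (fixedPoint G β σ (max t s)))
        ≤ (teamPerformance G β (fixedPoint G β σ (max t s)))⁻¹ := hD_le _ (hYt.trans_le hYv)
      _ ≤ (teamPerformance G β (fixedPoint G β σ t))⁻¹ := inv_anti₀ hYt hYv
      _ < s := inv_lt_of_inv_lt₀ hs.1 hlt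
      _ ≤ max t s := le_max_right t s
  · obtain ⟨v, hv, hlt⟩ := not_bddAbove_iff.1 hbdd (D 0)
    have hY := teamPerformance_nonneg hG hβ (fixedPoint_spec hv).1
    exact ⟨v, hv, (hD_anti (mem_Ici.2 le_rfl) (mem_Ici.2 hY) hY).trans_lt hlt⟩

theorem exists_isFixedPt_response_marginal (hD_pos : ∀ y, 0 ≤ y → 0 < D y)
    (hD_le : ∀ y, 0 < y → D y ≤ y⁻¹) (hD_cont : ∀ y, 0 ≤ y → ContinuousAt D y) :
    ∃ a, 0 ≤ a ∧ IsFixedPt (response G β σ (D (teamPerformance G β a))) a := by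
  let Φ s := D (teamPerformance G β (fixedPoint G β σ s))
  have hY : ∀ s ∈ solvable G β σ, 0 ≤ teamPerformance G β (fixedPoint G β σ s) := fun s hs =>
    teamPerformance_nonneg hG hβ (fixedPoint_spec hs).1
  obtain ⟨v, hv, hΦv⟩ : ∃ v ∈ solvable G β σ, Φ v < v := exists_marginal_lt hG hβ hσ hD_anti hD_le
  have hΦv_pos : 0 < Φ v := hD_pos _ (hY v hv)
  set u := Φ v / 2 with hu_def
  have hu : 0 < u := half_pos hΦv_pos
  have huv : u ≤ v := by linarith
  have huS : u ∈ solvable G β σ := mem_solvable_of_le hG hβ hσ hv hu huv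
  have hΦu : Φ v ≤ Φ u := hD_anti (mem_Ici.2 (hY u huS)) (mem_Ici.2 (hY v hv))
    (teamPerformance_le_teamPerformance hG hβ (fixedPoint_spec huS).1
      (monotoneOn_fixedPoint hG hβ hσ huS hv huv))
  have hcont : ContinuousOn (fun s => s - Φ s) (Icc u v) := by
    refine continuousOn_id.sub fun s hs => ?_
    have hS := mem_solvable_of_le hG hβ hσ hv (hu.trans_le hs.1) hs.2
    have hYs : ContinuousWithinAt (teamPerformance G β ∘ fixedPoint G β σ) (Icc u v) s :=
      continuous_teamPerformance.comp_continuousOn (continuousOn_fixedPoint hG hβ hσ hu hv) s hs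
    exact ContinuousAt.comp_continuousWithinAt (x := s) (hD_cont _ (hY s hS)) hYs
  obtain ⟨s, hs, hΦs⟩ := intermediate_value_Icc huv hcont
    (show (0 : ℝ) ∈ Icc (u - Φ u) (v - Φ v) from ⟨by linarith, by linarith⟩)
  have hS := mem_solvable_of_le hG hβ hσ hv (hu.trans_le hs.1) hs.2
  refine ⟨fixedPoint G β σ s, (fixedPoint_spec hS).1, ?_⟩
  convert (fixedPoint_spec hS).2 using 2
  exact (sub_eq_zero.1 hΦs).symm

end FixedPoint

theorem IsEquilibrium.eq (hG : ∀ i j, 0 ≤ G i j) (hβ : 0 ≤ β) (hσ : ∀ i, 0 ≤ σ i)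
    {D : ℝ → ℝ} (hD_anti : AntitoneOn D (Ici 0)) (hD_pos : ∀ y, 0 ≤ y → 0 < D y)
    {p q : (Fin n → ℝ) × ℝ} (hp : IsEquilibrium G β σ D p) (hq : IsEquilibrium G β σ D q) :
    p = q := by
  wlog hpq : p.2 ≤ q.2 generalizing p q
  · exact (this hq hp (le_of_not_ge hpq)).symm
  obtain ⟨hp1, hp2, hpf, hpY⟩ := hp
  obtain ⟨hq1, hq2, hqf, hqY⟩ := hq
  have hqp : q.1 ≤ p.1 :=
    isFixedPt_response_le hG hβ hσ (hD_pos _ hq2) (hD_anti hp2 hq2 hpq) hq1 hqf hp1 hpf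
  have h2 : p.2 = q.2 :=
    le_antisymm hpq (by rw [hpY, hqY]; exact teamPerformance_le_teamPerformance hG hβ hq1 hqp)
  have h1 : p.1 = q.1 :=
    isFixedPt_response_unique hG hβ hσ (hD_pos _ hp2) hp1 hpf hq1 (h2 ▸ hqf)
  exact Prod.ext h1 h2

end TeamEquilibrium

open TeamEquilibrium

theorem statement_0 {n : ℕ} (G : Matrix (Fin n) (Fin n) ℝ)
    (hG_nonneg : ∀ i j, 0 ≤ G i j)
    (β : ℝ) (hβ : 0 < β)
    (P : ℝ → ℝ)
    (hP_mono : StrictMonoOn P (Set.Ici (0:ℝ)))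
    (hP_conc : ConcaveOn ℝ (Set.Ici (0:ℝ)) P)
    (hP_range : ∀ y : ℝ, 0 ≤ y → P y ∈ Set.Ico (0:ℝ) 1)
    (hP_diff : ∀ y : ℝ, 0 ≤ y → DifferentiableAt ℝ P y)
    (hP_diff2 : ∀ y : ℝ, 0 ≤ y → DifferentiableAt ℝ (deriv P) y)
    (σ : Fin n → ℝ) (hσ : ∀ i, 0 ≤ σ i) :
    (∃! p : (Fin n → ℝ) × ℝ,
      (∀ i, 0 ≤ p.1 i) ∧ 0 ≤ p.2 ∧
      ((1 : Matrix (Fin n) (Fin n) ℝ)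
          - (deriv P p.2 * β) • (Matrix.diagonal σ * G)).mulVec p.1 = deriv P p.2 • σ ∧
      p.2 = ∑ i, p.1 i + β / 2 * ∑ i, ∑ j, G i j * p.1 i * p.1 j) ∧
    (∀ p : (Fin n → ℝ) × ℝ,
      ((∀ i, 0 ≤ p.1 i) ∧ 0 ≤ p.2 ∧
      ((1 : Matrix (Fin n) (Fin n) ℝ)
          - (deriv P p.2 * β) • (Matrix.diagonal σ * G)).mulVec p.1 = deriv P p.2 • σ ∧
      p.2 = ∑ i, p.1 i + β / 2 * ∑ i, ∑ j, G i j * p.1 i * p.1 j) →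
      (∀ i, 0 < σ i → 0 < p.1 i) ∧ (∀ i, σ i = 0 → p.1 i = 0)) := by
  simp only [mulVec_eq_smul_iff_isFixedPt]
  change (∃! p, IsEquilibrium G β σ (deriv P) p) ∧ ∀ p, IsEquilibrium G β σ (deriv P) p → _
  have hD_anti : AntitoneOn (deriv P) (Ici 0) := hP_conc.antitoneOn_deriv hP_diff
  have hD_pos : ∀ y, 0 ≤ y → 0 < deriv P y := fun y hy =>
    hP_conc.deriv_pos hP_mono hy (mem_Ici.2 (by linarith)) (lt_add_one y) (hP_diff y hy)
  have hD_le : ∀ y, 0 < y → deriv P y ≤ y⁻¹ := fun y hy =>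
    hP_conc.deriv_le_inv hy (hP_diff y hy.le) (hP_range 0 le_rfl).1 (hP_range y hy.le).2.le
  obtain ⟨a, ha, hfix⟩ := exists_isFixedPt_response_marginal hG_nonneg hβ.le hσ hD_anti hD_pos
    hD_le fun y hy => (hP_diff2 y hy).continuousAt
  have hp : IsEquilibrium G β σ (deriv P) (a, teamPerformance G β a) :=
    ⟨ha, teamPerformance_nonneg hG_nonneg hβ.le ha, hfix, rfl⟩
  refine ⟨⟨_, hp, fun q hq => hq.eq hG_nonneg hβ.le hσ hD_anti hD_pos hp⟩,
    fun p ⟨hp1, hp2, hpf, _⟩ => ⟨fun i hi => ?_, fun i hi => ?_⟩⟩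
  · exact mul_pos (hD_pos _ hp2) hi |>.trans_le
      (smul_le_of_isFixedPt hG_nonneg hβ.le hσ (hD_pos _ hp2).le hp1 hpf i)
  · simpa [response, hi] using congrFun hpf.eq.symm i
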